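/- arXiv:1805.02681 — 2 statements merged into one kernel-verified Lean document; each statement's English description precedes it below -/
import Mathlib

section
/- Let X_β and X_α be two disjoint locally closed subsets of ℂ^n whose closures are algebraic sets, such that every irreducible component of cl(X_α) has dimension d_α and T_y X_α := ⋂_{h ∈ I(cl(X_α))} ker d_y h has complex dimension d_α for every y ∈ X_α, and similarly every irreducible component of cl(X_β) has dimension d_β and T_x X_β := ⋂_{h ∈ I(cl(X_β))} ker d_x h has complex dimension d_β for every x ∈ X_β. Let x ∈ X_β with X_β ⊆ cl(X_α), and assume the pair (X_α, X_β) satisfies Whitney condition (a) at x: for every sequence y^k ∈ X_α with y^k → x such that T_{y^k}X_α converges to a subspace T (i.e. δ(T_{y^k}X_α, T) → 0 and δ(T, T_{y^k}X_α) → 0), one has T ⊇ T_x X_β. Let f be a polynomial map ℂ^n → ℂ^m, assume d_x f|_{T_x X_β} is surjective and d_y f|_{T_y X_α} is surjective for all y ∈ X_α in some neighborhood of x, and for a point z of a stratum X_σ with surjective restricted differential and a vector e ∈ ℂ^m let v^σ_e(z) denote the horizontal lift of e: the unique vector of T_z X_σ orthogonal (for the Hermitian product) to ker(d_z f|_{T_z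 X_σ}) with d_z f(v^σ_e(z)) = e. Then for each vector e of the standard basis of ℂ^m there exists an open neighborhood W of x of radius at most 1 such that for every y ∈ W ∩ X_α one has ‖v^α_e(y)‖ < 2‖v^β_e(x)‖. -/
open Filter Metric Set Topology

noncomputable section

abbrev Cspace (n : ℕ) := EuclideanSpace ℂ (Fin n)

def polyFun {n : ℕ} (p : MvPolynomial (Fin n) ℂ) (x : Cspace n) : ℂ :=
  MvPolynomial.eval (fun i => x i) p

def IsAlgebraicSet {n : ℕ} (Z : Set (Cspace n)) : Prop :=
  ∃ S : Set (MvPolynomial (Fin n) ℂ), Z = {x | ∀ p ∈ S, polyFun p x = 0}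

def idealOf {n : ℕ} (Z : Set (Cspace n)) : Set (MvPolynomial (Fin n) ℂ) :=
  {p | ∀ x ∈ Z, polyFun p x = 0}

def polyMap {n m : ℕ} (F : Fin m → MvPolynomial (Fin n) ℂ) : Cspace n → Cspace m :=
  fun x => WithLp.toLp 2 (fun i => polyFun (F i) x)

def IsIrreducibleAlg {n : ℕ} (Z : Set (Cspace n)) : Prop :=
  IsAlgebraicSet Z ∧ Z.Nonempty ∧
    ∀ Z₁ Z₂ : Set (Cspace n), IsAlgebraicSet Z₁ → IsAlgebraicSet Z₂ →
      Z ⊆ Z₁ ∪ Z₂ → Z ⊆ Z₁ ∨ Z ⊆ Z₂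

def algDimGE {n : ℕ} (Z : Set (Cspace n)) (d : ℕ) : Prop :=
  ∃ C : Fin (d + 1) → Set (Cspace n),
    StrictMono C ∧ ∀ i, IsIrreducibleAlg (C i) ∧ C i ⊆ Z

def algDim {n : ℕ} (Z : Set (Cspace n)) : WithBot ℕ∞ :=
  sSup {e : WithBot ℕ∞ | ∃ d : ℕ, e = (d : ℕ∞) ∧ algDimGE Z d}

def IsIrredComponent {n : ℕ} (Z C : Set (Cspace n)) : Prop :=
  IsIrreducibleAlg C ∧ C ⊆ Z ∧
    ∀ C' : Set (Cspace n), IsIrreducibleAlg C' → C' ⊆ Z → C ⊆ C' → C = C'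

def tangentSpaceOf {n : ℕ} (Z : Set (Cspace n)) (x : Cspace n) :
    Submodule ℂ (Cspace n) :=
  ⨅ h ∈ idealOf Z, LinearMap.ker (fderiv ℂ (polyFun h) x : Cspace n →ₗ[ℂ] ℂ)

def subspaceDist {n : ℕ} (F G : Submodule ℂ (Cspace n)) : ℝ :=
  sSup {d : ℝ | ∃ u ∈ F, ‖u‖ = 1 ∧ d = Metric.infDist u (G : Set (Cspace n))}

def TendstoSubspaces {n : ℕ} (Tk : ℕ → Submodule ℂ (Cspace n))
    (T : Submodule ℂ (Cspace n)) : Prop :=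
  Tendsto (fun k => subspaceDist (Tk k) T) atTop (nhds 0) ∧
  Tendsto (fun k => subspaceDist T (Tk k)) atTop (nhds 0)

/-- `v` is the horizontal lift of `e` at `z` along the stratum with tangent space `T`:
`v ∈ T`, `v` is orthogonal (w.r.t. the Hermitian product) to `ker (d_z f|_T)` and
`d_z f (v) = e`. -/
def HorizLift {n m : ℕ} (f : Cspace n → Cspace m) (T : Submodule ℂ (Cspace n))
    (z : Cspace n) (e : Cspace m) (v : Cspace n) : Prop :=
  v ∈ T ∧ (∀ u ∈ T, fderiv ℂ f z u = 0 → (inner ℂ v u : ℂ) = 0) ∧ fderiv ℂ f z v = e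

/-!
The horizontal lift `v^σ_e(z)` is the vector of least norm among the `u ∈ T_z X_σ` with
`d_z f u = e`, so it suffices to find such `u` at points `y ∈ X_α` near `x` with norm close to
`‖v^β_e(x)‖`. Along a sequence `y_k → x` in `X_α`, orthonormal frames of `T_{y_k} X_α` have a
convergent subsequence, so these tangent spaces converge to some `T`, and `T ⊇ T_x X_β` by
Whitney (a). Then `d_x f` is still onto on `T` and `v^β_e(x) ∈ T`; a right inverse of `d_x f`
on the limit frame, perturbed by a Neumann-series inverse, solves `d_{y_k} f u = e` in
`T_{y_k} X_α` with `u → v^β_e(x)`.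
-/

open Submodule

theorem contDiff_polyFun {n : ℕ} (p : MvPolynomial (Fin n) ℂ) {k : WithTop ℕ∞} :
    ContDiff ℂ k (polyFun p) :=
  (AnalyticOnNhd.eval_continuousLinearMap' (fun i => EuclideanSpace.proj (𝕜 := ℂ) (ι := Fin n) i)
    p).contDiff

theorem contDiff_polyMap {n m : ℕ} (F : Fin m → MvPolynomial (Fin n) ℂ) {k : WithTop ℕ∞} :
    ContDiff ℂ k (polyMap F) :=
  contDiff_euclidean.2 fun i => contDiff_polyFun (F i)

theorem HorizLift.norm_le {n m : ℕ} {f : Cspace n → Cspace m} {T : Submodule ℂ (Cspace n)}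
    {z : Cspace n} {e : Cspace m} {v u : Cspace n} (hv : HorizLift f T z e v) (hu : u ∈ T)
    (hue : fderiv ℂ f z u = e) : ‖v‖ ≤ ‖u‖ := by
  obtain ⟨hvT, hv_perp, hve⟩ := hv
  have h := norm_add_sq_eq_norm_sq_add_norm_sq_of_inner_eq_zero v (u - v)
    (hv_perp _ (sub_mem hu hvT) (by rw [map_sub, hue, hve, sub_self]))
  rw [add_sub_cancel] at h
  exact (mul_self_le_mul_self_iff (norm_nonneg v) (norm_nonneg u)).2
    (h ▸ le_add_of_nonneg_right (mul_self_nonneg _))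

section ContinuousLinearMapLimits

variable {𝕜 E F G : Type*} [NontriviallyNormedField 𝕜] [NormedAddCommGroup E] [NormedSpace 𝕜 E]
  [NormedAddCommGroup F] [NormedSpace 𝕜 F] [NormedAddCommGroup G] [NormedSpace 𝕜 G]
  {ι : Type*} {l : Filter ι}

theorem Filter.Tendsto.clm_apply {A : ι → E →L[𝕜] F} {A₀ : E →L[𝕜] F} {u : ι → E} {u₀ : E}
    (hA : Tendsto A l (𝓝 A₀)) (hu : Tendsto u l (𝓝 u₀)) :
    Tendsto (fun k => A k (u k)) l (𝓝 (A₀ u₀)) :=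
  (isBoundedBilinearMap_apply.continuous.tendsto _).comp (hA.prodMk_nhds hu)

theorem Filter.Tendsto.clm_comp {A : ι → F →L[𝕜] G} {A₀ : F →L[𝕜] G} {B : ι → E →L[𝕜] F}
    {B₀ : E →L[𝕜] F} (hA : Tendsto A l (𝓝 A₀)) (hB : Tendsto B l (𝓝 B₀)) :
    Tendsto (fun k => (A k).comp (B k)) l (𝓝 (A₀.comp B₀)) :=
  (isBoundedBilinearMap_comp.continuous.tendsto _).comp (hA.prodMk_nhds hB)

variable [CompleteSpace 𝕜] [FiniteDimensional 𝕜 F]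

theorem exists_tendsto_apply_eq_of_tendsto_of_surjective {M : ι → E →L[𝕜] F} {M₀ : E →L[𝕜] F}
    (hM : Tendsto M l (𝓝 M₀)) (hM₀ : Function.Surjective M₀) (a : E) :
    ∃ a' : ι → E, Tendsto a' l (𝓝 a) ∧ ∀ᶠ k in l, M k (a' k) = M₀ a := by
  have : CompleteSpace F := FiniteDimensional.complete 𝕜 F
  obtain ⟨R, hR⟩ := M₀.exists_rightInverse_of_surjective (LinearMap.range_eq_top.2 hM₀)
  set N : ι → F →L[𝕜] F := fun k => (M k).comp R
  have hN : Tendsto N l (𝓝 1) := by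
    have h := hM.clm_comp (tendsto_const_nhds (x := R))
    rwa [hR, ← ContinuousLinearMap.one_def] at h
  have hNinv : Tendsto (fun k => Ring.inverse (N k)) l (𝓝 1) := by
    have h := (NormedRing.inverse_continuousAt (1 : (F →L[𝕜] F)ˣ)).tendsto.comp hN
    rwa [Units.val_one, Ring.inverse_one] at h
  have hres : Tendsto (fun k => M₀ a - M k a) l (𝓝 0) := by
    simpa using (tendsto_const_nhds (x := M₀ a)).sub (hM.clm_apply (tendsto_const_nhds (x := a)))
  -- correct `a` by a right inverse of `M k`, built from `R` and the inverse of `N k ≈ 1`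
  refine ⟨fun k => a + R (Ring.inverse (N k) (M₀ a - M k a)), ?_, ?_⟩
  · simpa using tendsto_const_nhds.add ((R.continuous.tendsto 0).comp (hNinv.clm_apply hres))
  · filter_upwards [hN.eventually (Units.isOpen.mem_nhds isUnit_one)] with k hk
    rw [map_add]
    change M k a + (N k * Ring.inverse (N k)) (M₀ a - M k a) = M₀ a
    rw [Ring.mul_inverse_cancel _ hk, one_apply_eq_self, add_sub_cancel]

end ContinuousLinearMapLimits

section OrthonormalFrames

variable {E : Type*} [NormedAddCommGroup E] [InnerProductSpace ℂ E]

theorem isClosed_setOf_orthonormal {ι : Type*} : IsClosed {b : ι → E | Orthonormal ℂ b} := by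
  classical
  simp_rw [orthonormal_iff_ite, ofPred_forall]
  exact isClosed_iInter fun i => isClosed_iInter fun j =>
    isClosed_eq ((continuous_apply i).inner (continuous_apply j)) continuous_const

theorem Submodule.exists_orthonormal_span_eq (T : Submodule ℂ E) [FiniteDimensional ℂ T] {d : ℕ}
    (hd : Module.finrank ℂ T = d) : ∃ b : Fin d → E, Orthonormal ℂ b ∧ span ℂ (range b) = T := by
  set B := (stdOrthonormalBasis ℂ T).reindex (finCongr hd)
  refine ⟨T.subtype ∘ B, B.orthonormal.comp_linearIsometry T.subtypeₗᵢ, ?_⟩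
  rw [range_comp, span_image, ← B.coe_toBasis, B.toBasis.span_eq, map_top, range_subtype]

theorem exists_subseq_orthonormal_tendsto [FiniteDimensional ℂ E] {d : ℕ}
    (T : ℕ → Submodule ℂ E) (hT : ∀ k, Module.finrank ℂ (T k) = d) :
    ∃ φ : ℕ → ℕ, StrictMono φ ∧ ∃ (b : ℕ → Fin d → E) (bL : Fin d → E),
      (∀ k, Orthonormal ℂ (b k)) ∧ (∀ k, span ℂ (range (b k)) = T (φ k)) ∧
        Tendsto b atTop (𝓝 bL) := by
  choose b hb_on hb_span using fun k => (T k).exists_orthonormal_span_eq (hT k)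
  have hbdd : Bornology.IsBounded (range b) := by
    refine isBounded_iff_forall_norm_le.2 ⟨1, ?_⟩
    rintro _ ⟨k, rfl⟩
    exact pi_norm_le_iff_of_nonneg zero_le_one |>.2 fun j => ((hb_on k).1 j).le
  obtain ⟨bL, -, φ, hφ, hlim⟩ := tendsto_subseq_of_bounded hbdd (mem_range_self ·)
  exact ⟨φ, hφ, b ∘ φ, bL, fun k => hb_on _, fun k => hb_span _, hlim⟩

end OrthonormalFrames

section FrameStability

variable {E F : Type*} [NormedAddCommGroup E] [NormedSpace ℂ E] [NormedAddCommGroup F]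
  [NormedSpace ℂ F] [FiniteDimensional ℂ F] {ι : Type*} {l : Filter ι} {d : ℕ}

theorem exists_tendsto_mem_span_apply_eq {b : ι → Fin d → E} {bL : Fin d → E}
    (hb : Tendsto b l (𝓝 bL)) {A : ι → E →L[ℂ] F} {A₀ : E →L[ℂ] F} (hA : Tendsto A l (𝓝 A₀))
    (hsurj : Function.Surjective (A₀.comp (span ℂ (range bL)).subtypeL)) {v : E}
    (hv : v ∈ span ℂ (range bL)) :
    ∃ u : ι → E, Tendsto u l (𝓝 v) ∧
      ∀ᶠ k in l, u k ∈ span ℂ (range (b k)) ∧ A k (u k) = A₀ v := by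
  set L := (ContinuousLinearEquiv.piRing (𝕜 := ℂ) (E := E) (Fin d)).symm
  have hL : ∀ c a, L c a = ∑ j, a j • c j := fun c a => LinearEquiv.piRing_symm_apply ℂ c a
  have hL_mem : ∀ c a, L c a ∈ span ℂ (range c) := fun c a =>
    hL c a ▸ (mem_span_range_iff_exists_fun ℂ).2 ⟨a, rfl⟩
  have hL_onto : ∀ w ∈ span ℂ (range bL), ∃ a, L bL a = w := fun w hw => by
    obtain ⟨a, rfl⟩ := (mem_span_range_iff_exists_fun ℂ).1 hw
    exact ⟨a, hL _ _⟩
  obtain ⟨a, rfl⟩ := hL_onto v hv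
  have hM₀ : Function.Surjective (A₀.comp (L bL)) := fun w => by
    obtain ⟨⟨u, hu⟩, rfl⟩ := hsurj w
    obtain ⟨a, rfl⟩ := hL_onto u hu
    exact ⟨a, rfl⟩
  have hLb : Tendsto (fun k => L (b k)) l (𝓝 (L bL)) := (L.continuous.tendsto bL).comp hb
  obtain ⟨a', ha', hev⟩ :=
    exists_tendsto_apply_eq_of_tendsto_of_surjective (hA.clm_comp hLb) hM₀ a
  exact ⟨fun k => L (b k) (a' k), hLb.clm_apply ha', hev.mono fun k hk => ⟨hL_mem _ _, hk⟩⟩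

end FrameStability

section SubspaceConvergence

variable {n : ℕ}

theorem subspaceDist_nonneg (F G : Submodule ℂ (Cspace n)) : 0 ≤ subspaceDist F G :=
  Real.sSup_nonneg <| by
    rintro _ ⟨u, -, -, rfl⟩
    exact infDist_nonneg

theorem subspaceDist_span_le_sum_norm_sub {d : ℕ} {u w : Fin d → Cspace n}
    (hu : Orthonormal ℂ u) {G : Submodule ℂ (Cspace n)} (hw : ∀ j, w j ∈ G) :
    subspaceDist (span ℂ (range u)) G ≤ ∑ j, ‖u j - w j‖ := by
  refine Real.sSup_le ?_ (Finset.sum_nonneg fun j _ => norm_nonneg _)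
  rintro _ ⟨v, hv, hv1, rfl⟩
  obtain ⟨a, rfl⟩ := (mem_span_range_iff_exists_fun ℂ).1 hv
  have ha : ∀ j, ‖a j‖ ≤ 1 := fun j => by
    calc ‖a j‖ = ‖(inner ℂ (u j) (∑ i, a i • u i) : ℂ)‖ := by rw [hu.inner_right_fintype]
      _ ≤ ‖u j‖ * ‖∑ i, a i • u i‖ := norm_inner_le_norm _ _
      _ = 1 := by rw [hu.1 j, hv1, one_mul]
  calc infDist (∑ j, a j • u j) G ≤ dist (∑ j, a j • u j) (∑ j, a j • w j) :=
        infDist_le_dist_of_mem (sum_mem fun j _ => smul_mem G _ (hw j))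
    _ = ‖∑ j, a j • (u j - w j)‖ := by simp only [dist_eq_norm, smul_sub, Finset.sum_sub_distrib]
    _ ≤ ∑ j, ‖a j • (u j - w j)‖ := norm_sum_le _ _
    _ ≤ ∑ j, ‖u j - w j‖ := Finset.sum_le_sum fun j _ => by
        rw [norm_smul]
        exact mul_le_of_le_one_left (norm_nonneg _) (ha j)

theorem tendstoSubspaces_span {d : ℕ} {b : ℕ → Fin d → Cspace n} {bL : Fin d → Cspace n}
    (hb : ∀ k, Orthonormal ℂ (b k)) (hlim : Tendsto b atTop (𝓝 bL)) :
    TendstoSubspaces (fun k => span ℂ (range (b k))) (span ℂ (range bL)) := by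
  have hbL : Orthonormal ℂ bL := isClosed_setOf_orthonormal.mem_of_tendsto hlim (.of_forall hb)
  have hsum : Tendsto (fun k => ∑ j, ‖b k j - bL j‖) atTop (𝓝 0) := by
    have hcont : Continuous fun c : Fin d → Cspace n => ∑ j, ‖c j - bL j‖ := by fun_prop
    rw [show (0 : ℝ) = ∑ j, ‖bL j - bL j‖ by simp]
    exact (hcont.tendsto bL).comp hlim
  constructor
  · refine squeeze_zero (fun k => subspaceDist_nonneg _ _) (fun k => ?_) hsum
    exact subspaceDist_span_le_sum_norm_sub (hb k) fun j => subset_span (mem_range_self j)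
  · refine squeeze_zero (fun k => subspaceDist_nonneg _ _) (fun k => ?_) hsum
    refine (subspaceDist_span_le_sum_norm_sub hbL (w := b k)
      fun j => subset_span (mem_range_self j)).trans_eq ?_
    simp only [norm_sub_rev]

end SubspaceConvergence

theorem eventually_exists_mem_apply_eq_norm_lt {n : ℕ} {F : Type*} [NormedAddCommGroup F]
    [NormedSpace ℂ F] [FiniteDimensional ℂ F] {S : Set (Cspace n)}
    {T : Cspace n → Submodule ℂ (Cspace n)} {d : ℕ} (hT : ∀ y ∈ S, Module.finrank ℂ (T y) = d)
    {x : Cspace n} {T₀ : Submodule ℂ (Cspace n)}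
    (hW : ∀ (ys : ℕ → Cspace n) (T' : Submodule ℂ (Cspace n)), (∀ k, ys k ∈ S) →
      Tendsto ys atTop (𝓝 x) → TendstoSubspaces (fun k => T (ys k)) T' → T₀ ≤ T')
    {A : Cspace n → Cspace n →L[ℂ] F} (hA : ContinuousAt A x)
    (hsurj : Function.Surjective ((A x).comp T₀.subtypeL)) {v : Cspace n} (hv : v ∈ T₀) {c : ℝ}
    (hc : ‖v‖ < c) :
    ∀ᶠ y in 𝓝[S] x, ∃ u ∈ T y, A y u = A x v ∧ ‖u‖ < c := by
  by_contra h
  rw [not_eventually, frequently_nhdsWithin_iff] at h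
  obtain ⟨y, hyx, hy⟩ := exists_seq_forall_of_frequently h
  obtain ⟨φ, hφ, b, bL, hb_on, hb_span, hb_lim⟩ :=
    exists_subseq_orthonormal_tendsto (fun k => T (y k)) fun k => hT _ (hy k).2
  have hyφ : Tendsto (y ∘ φ) atTop (𝓝 x) := hyx.comp hφ.tendsto_atTop
  have hT₀ : T₀ ≤ span ℂ (range bL) := by
    refine hW (y ∘ φ) _ (fun k => (hy _).2) hyφ ?_
    convert tendstoSubspaces_span hb_on hb_lim using 2 with k
    exact (hb_span k).symm
  have hsurjL : Function.Surjective ((A x).comp (span ℂ (range bL)).subtypeL) := fun w =>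
    let ⟨u, hu⟩ := hsurj w
    ⟨⟨u, hT₀ u.2⟩, hu⟩
  obtain ⟨u, hu_lim, hu⟩ :=
    exists_tendsto_mem_span_apply_eq hb_lim (hA.tendsto.comp hyφ) hsurjL (hT₀ hv)
  obtain ⟨k, ⟨huT, huA⟩, hu_lt⟩ := (hu.and (hu_lim.norm.eventually (gt_mem_nhds hc))).exists
  exact (hy (φ k)).1 ⟨u k, hb_span k ▸ huT, huA, hu_lt⟩

theorem stmt11_general {n m : ℕ} (Xα Xβ : Set (Cspace n)) (dα : ℕ)
    (htangα : ∀ y ∈ Xα, Module.finrank ℂ (tangentSpaceOf (closure Xα) y) = dα)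
    (x : Cspace n)
    -- Whitney condition (a) at `x`
    (hWa : ∀ (ys : ℕ → Cspace n) (T : Submodule ℂ (Cspace n)),
      (∀ k, ys k ∈ Xα) → Tendsto ys atTop (nhds x) →
      TendstoSubspaces (fun k => tangentSpaceOf (closure Xα) (ys k)) T →
      tangentSpaceOf (closure Xβ) x ≤ T)
    -- `f` is a polynomial map, submersive on `X_β` at `x` and on `X_α` near `x`
    (F : Fin m → MvPolynomial (Fin n) ℂ)
    (f : Cspace n → Cspace m) (hf : f = polyMap F)
    (hsurjβ : Function.Surjective
      ⇑((fderiv ℂ f x).comp (tangentSpaceOf (closure Xβ) x).subtypeL)) :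
    ∀ i : Fin m, ∃ W : Set (Cspace n), IsOpen W ∧ x ∈ W ∧ W ⊆ Metric.ball x 1 ∧
      ∀ y ∈ W ∩ Xα, ∀ vα vβ : Cspace n,
        HorizLift f (tangentSpaceOf (closure Xα) y) y
          (EuclideanSpace.single i (1 : ℂ)) vα →
        HorizLift f (tangentSpaceOf (closure Xβ) x) x
          (EuclideanSpace.single i (1 : ℂ)) vβ →
        ‖vα‖ < 2 * ‖vβ‖ := by
  intro i
  by_cases hlift : ∃ v₀, HorizLift f (tangentSpaceOf (closure Xβ) x) x
    (EuclideanSpace.single i (1 : ℂ)) v₀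
  swap
  · exact ⟨ball x 1, isOpen_ball, mem_ball_self one_pos, subset_rfl,
      fun _ _ _ vβ _ hvβ => absurd ⟨vβ, hvβ⟩ hlift⟩
  obtain ⟨v₀, hv₀⟩ := hlift
  have hv₀_pos : 0 < ‖v₀‖ := norm_pos_iff.2 fun h => by
    simpa [h, eq_comm (a := (0 : Cspace m))] using hv₀.2.2
  have hdf : Continuous (fderiv ℂ f) :=
    (hf ▸ contDiff_polyMap F (k := 1)).continuous_fderiv one_ne_zero
  obtain ⟨U, hU, hxU, hUα⟩ := mem_nhdsWithin.1 <|
    eventually_exists_mem_apply_eq_norm_lt htangα hWa hdf.continuousAt hsurjβ hv₀.1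
      (lt_two_mul_self hv₀_pos)
  refine ⟨U ∩ ball x 1, hU.inter isOpen_ball, ⟨hxU, mem_ball_self one_pos⟩, inter_subset_right, ?_⟩
  rintro y ⟨⟨hyU, -⟩, hyα⟩ vα vβ hvα hvβ
  obtain ⟨u, huT, hu, hu_lt⟩ := hUα ⟨hyU, hyα⟩
  calc ‖vα‖ ≤ ‖u‖ := hvα.norm_le huT (hu.trans hv₀.2.2)
    _ < 2 * ‖v₀‖ := hu_lt
    _ ≤ 2 * ‖vβ‖ := by gcongr; exact hv₀.norm_le hvβ.1 hvβ.2.2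

theorem stmt11 {n m : ℕ} (Xα Xβ : Set (Cspace n)) (dα dβ : ℕ)
    (hdisj : Disjoint Xα Xβ)
    (hlcα : IsLocallyClosed Xα) (hlcβ : IsLocallyClosed Xβ)
    (halgα : IsAlgebraicSet (closure Xα)) (halgβ : IsAlgebraicSet (closure Xβ))
    (hpureα : ∀ C, IsIrredComponent (closure Xα) C →
      algDim C = ((dα : ℕ∞) : WithBot ℕ∞))
    (htangα : ∀ y ∈ Xα, Module.finrank ℂ (tangentSpaceOf (closure Xα) y) = dα)
    (hpureβ : ∀ C, IsIrredComponent (closure Xβ) C →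
      algDim C = ((dβ : ℕ∞) : WithBot ℕ∞))
    (htangβ : ∀ x' ∈ Xβ, Module.finrank ℂ (tangentSpaceOf (closure Xβ) x') = dβ)
    (x : Cspace n) (hx : x ∈ Xβ) (hsub : Xβ ⊆ closure Xα)
    -- Whitney condition (a) at `x`
    (hWa : ∀ (ys : ℕ → Cspace n) (T : Submodule ℂ (Cspace n)),
      (∀ k, ys k ∈ Xα) → Tendsto ys atTop (nhds x) →
      TendstoSubspaces (fun k => tangentSpaceOf (closure Xα) (ys k)) T →
      tangentSpaceOf (closure Xβ) x ≤ T)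
    -- `f` is a polynomial map, submersive on `X_β` at `x` and on `X_α` near `x`
    (F : Fin m → MvPolynomial (Fin n) ℂ)
    (f : Cspace n → Cspace m) (hf : f = polyMap F)
    (hsurjβ : Function.Surjective
      ⇑((fderiv ℂ f x).comp (tangentSpaceOf (closure Xβ) x).subtypeL))
    (hsurjα : ∃ V : Set (Cspace n), IsOpen V ∧ x ∈ V ∧ ∀ y ∈ Xα ∩ V,
      Function.Surjective
        ⇑((fderiv ℂ f y).comp (tangentSpaceOf (closure Xα) y).subtypeL)) :
    ∀ i : Fin m, ∃ W : Set (Cspace n), IsOpen W ∧ x ∈ W ∧ W ⊆ Metric.ball x 1 ∧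
      ∀ y ∈ W ∩ Xα, ∀ vα vβ : Cspace n,
        HorizLift f (tangentSpaceOf (closure Xα) y) y
          (EuclideanSpace.single i (1 : ℂ)) vα →
        HorizLift f (tangentSpaceOf (closure Xβ) x) x
          (EuclideanSpace.single i (1 : ℂ)) vβ →
        ‖vα‖ < 2 * ‖vβ‖ :=
  stmt11_general Xα Xβ dα htangα x hWa F f hf hsurjβ
end
end

section
/- Let k = ℝ or k = ℂ, and let A : k^n → k^m be a linear map with component functionals A_1,…,A_m (so A(x) = (A_1(x),…,A_m(x))). For each i let ∇A_i ∈ k^n be the vector satisfying A_i(x) = ⟨∇A_i, x⟩ for all x ∈ k^n, where ⟨·,·⟩ is the standard (Hermitian) inner product. Define the Kuo number κ(A) := min_{1 ≤ i ≤ m} dist(∇A_i, span{∇A_j : j ≠ i}) and the Rabier number ν(A) := inf{‖A*φ‖ : φ ∈ k^m, ‖φ‖ = 1}, where A* is the adjoint of A. Then ν(A) ≤ κ(A) ≤ √m · ν(A). -/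
/-!
Since `A* φ = ∑ j, φ j • ∇A_j`, both numbers measure how far the gradients are from being linearly
dependent. If `v` lies in the span of the `∇A_j`, `j ≠ i`, then `∇A_i - v = A* ψ` for some `ψ` with
`ψ i = 1`, so `‖ψ‖ ≥ 1` and `ν ‖ψ‖ ≤ ‖∇A_i - v‖`: this gives `ν ≤ κ`. Conversely a unit vector `φ`
has a coordinate with `‖φ i‖ ≥ 1 / √m`, and `(φ i)⁻¹ • A* φ` is `∇A_i` minus an element of that
span, so `κ ≤ ‖A* φ‖ / ‖φ i‖ ≤ √m ‖A* φ‖`.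
-/

noncomputable def kuoNumber {𝕜 : Type*} [RCLike 𝕜] {n m : ℕ}
    (gA : Fin m → EuclideanSpace 𝕜 (Fin n)) : ℝ :=
  ⨅ i : Fin m, Metric.infDist (gA i)
    ((Submodule.span 𝕜 (gA '' {j | j ≠ i}) : Submodule 𝕜 (EuclideanSpace 𝕜 (Fin n))) :
      Set (EuclideanSpace 𝕜 (Fin n)))

noncomputable def rabierNumber {𝕜 : Type*} [RCLike 𝕜] {n m : ℕ}
    (A : EuclideanSpace 𝕜 (Fin n) →L[𝕜] EuclideanSpace 𝕜 (Fin m)) : ℝ :=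
  sInf {r : ℝ | ∃ φ : EuclideanSpace 𝕜 (Fin m), ‖φ‖ = 1 ∧
    r = ‖ContinuousLinearMap.adjoint A φ‖}

section Span

variable {𝕜 ι E : Type*} [Fintype ι]

theorem sum_erase_smul_mem_span [DecidableEq ι] [Semiring 𝕜] [AddCommMonoid E] [Module 𝕜 E]
    (g : ι → E) (c : ι → 𝕜) (i : ι) :
    ∑ j ∈ Finset.univ.erase i, c j • g j ∈ Submodule.span 𝕜 (g '' {j | j ≠ i}) :=
  Submodule.sum_mem _ fun j hj =>
    Submodule.smul_mem _ _ (Submodule.subset_span ⟨j, Finset.ne_of_mem_erase hj, rfl⟩)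

theorem exists_sum_smul_eq_sub_of_mem_span [Ring 𝕜] [AddCommGroup E] [Module 𝕜 E] {g : ι → E}
    {i : ι} {v : E} (hv : v ∈ Submodule.span 𝕜 (g '' {j | j ≠ i})) :
    ∃ c : ι → 𝕜, c i = 1 ∧ ∑ j, c j • g j = g i - v := by
  classical
  obtain ⟨l, hl, rfl⟩ := Finsupp.mem_span_image_iff_linearCombination 𝕜 |>.mp hv
  have hli : l i = 0 := Finsupp.notMem_support_iff.mp fun h => hl h rfl
  refine ⟨Pi.single i 1 - ⇑l, by simp [hli], ?_⟩
  simp [sub_smul, Finset.sum_sub_distrib, Finsupp.linearCombination_apply, Finsupp.sum_fintype]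

theorem infDist_span_mul_norm_le_norm_sum_smul [NormedField 𝕜] [NormedAddCommGroup E]
    [NormedSpace 𝕜 E] (g : ι → E) (c : ι → 𝕜) (i : ι) :
    Metric.infDist (g i) (Submodule.span 𝕜 (g '' {j | j ≠ i})) * ‖c i‖ ≤
      ‖∑ j, c j • g j‖ := by
  classical
  rcases eq_or_ne (c i) 0 with hci | hci
  · simp [hci]
  set w := ∑ j ∈ Finset.univ.erase i, c j • g j
  have hw : -(c i)⁻¹ • w ∈ Submodule.span 𝕜 (g '' {j | j ≠ i}) :=
    Submodule.smul_mem _ _ (sum_erase_smul_mem_span g c i)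
  have hdiff : g i - -(c i)⁻¹ • w = (c i)⁻¹ • ∑ j, c j • g j := by
    rw [← Finset.add_sum_erase _ _ (Finset.mem_univ i), smul_add, smul_smul,
      inv_mul_cancel₀ hci, one_smul, neg_smul, sub_neg_eq_add]
  calc Metric.infDist (g i) (Submodule.span 𝕜 (g '' {j | j ≠ i})) * ‖c i‖
      ≤ dist (g i) (-(c i)⁻¹ • w) * ‖c i‖ := by
        gcongr; exact Metric.infDist_le_dist_of_mem hw
    _ = ‖∑ j, c j • g j‖ := by
        rw [dist_eq_norm, hdiff, norm_smul, norm_inv, mul_right_comm,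
          inv_mul_cancel₀ (norm_ne_zero_iff.mpr hci), one_mul]

end Span

section Euclidean

variable {𝕜 ι E : Type*} [RCLike 𝕜] [Fintype ι]

theorem EuclideanSpace.exists_norm_le_sqrt_card_mul_norm_apply [Nonempty ι]
    (φ : EuclideanSpace 𝕜 ι) : ∃ i, ‖φ‖ ≤ √(Fintype.card ι) * ‖φ i‖ := by
  obtain ⟨i, -, hmax⟩ := Finset.univ.exists_max_image (fun j => ‖φ j‖) Finset.univ_nonempty
  refine ⟨i, ?_⟩
  calc ‖φ‖ = √(∑ j, ‖φ j‖ ^ 2) := EuclideanSpace.norm_eq φ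
    _ ≤ √(Fintype.card ι * ‖φ i‖ ^ 2) := by
        gcongr
        calc ∑ j, ‖φ j‖ ^ 2 ≤ ∑ _j : ι, ‖φ i‖ ^ 2 :=
              Finset.sum_le_sum fun j hj => by gcongr; exact hmax j hj
          _ = Fintype.card ι * ‖φ i‖ ^ 2 := by simp
    _ = √(Fintype.card ι) * ‖φ i‖ := by
        rw [Real.sqrt_mul (Nat.cast_nonneg _), Real.sqrt_sq (norm_nonneg _)]

theorem ContinuousLinearMap.adjoint_apply_eq_sum_smul [NormedAddCommGroup E] [InnerProductSpace 𝕜 E]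
    [CompleteSpace E] {A : E →L[𝕜] EuclideanSpace 𝕜 ι} {g : ι → E}
    (hg : ∀ i x, A x i = inner 𝕜 (g i) x) (φ : EuclideanSpace 𝕜 ι) :
    ContinuousLinearMap.adjoint A φ = ∑ j, φ j • g j := by
  refine ext_inner_right 𝕜 fun x => ?_
  simp [ContinuousLinearMap.adjoint_inner_left, sum_inner, inner_smul_left, ← hg,
    PiLp.inner_apply, mul_comm]

end Euclidean

section Numbers

variable {𝕜 : Type*} [RCLike 𝕜] {n m : ℕ}

theorem rabierNumber_nonneg (A : EuclideanSpace 𝕜 (Fin n) →L[𝕜] EuclideanSpace 𝕜 (Fin m)) :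
    0 ≤ rabierNumber A :=
  Real.sInf_nonneg fun _ ⟨_, _, hr⟩ => hr ▸ norm_nonneg _

theorem rabierNumber_mul_norm_le (A : EuclideanSpace 𝕜 (Fin n) →L[𝕜] EuclideanSpace 𝕜 (Fin m))
    (ψ : EuclideanSpace 𝕜 (Fin m)) :
    rabierNumber A * ‖ψ‖ ≤ ‖ContinuousLinearMap.adjoint A ψ‖ := by
  rcases eq_or_ne ψ 0 with rfl | hψ
  · simp
  have hψ' : ‖ψ‖ ≠ 0 := norm_ne_zero_iff.mpr hψ
  have hunit : ‖(‖ψ‖⁻¹ : 𝕜) • ψ‖ = 1 := by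
    rw [norm_smul, norm_inv, RCLike.norm_ofReal, abs_norm, inv_mul_cancel₀ hψ']
  have hle : rabierNumber A ≤ ‖ContinuousLinearMap.adjoint A ((‖ψ‖⁻¹ : 𝕜) • ψ)‖ :=
    csInf_le ⟨0, fun _ ⟨_, _, hr⟩ => hr ▸ norm_nonneg _⟩ ⟨_, hunit, rfl⟩
  rw [map_smul, norm_smul, norm_inv, RCLike.norm_ofReal, abs_norm] at hle
  rwa [← le_div_iff₀ (norm_pos_iff.mpr hψ), div_eq_inv_mul]

theorem le_rabierNumber [NeZero m] {A : EuclideanSpace 𝕜 (Fin n) →L[𝕜] EuclideanSpace 𝕜 (Fin m)}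
    {c : ℝ} (h : ∀ φ : EuclideanSpace 𝕜 (Fin m), ‖φ‖ = 1 → c ≤ ‖ContinuousLinearMap.adjoint A φ‖) :
    c ≤ rabierNumber A :=
  le_csInf ⟨_, EuclideanSpace.single 0 1, by simp, rfl⟩ fun _ ⟨φ, hφ, hr⟩ => hr ▸ h φ hφ

theorem kuoNumber_nonneg (gA : Fin m → EuclideanSpace 𝕜 (Fin n)) : 0 ≤ kuoNumber gA :=
  Real.iInf_nonneg fun _ => Metric.infDist_nonneg

theorem kuoNumber_le (gA : Fin m → EuclideanSpace 𝕜 (Fin n)) (i : Fin m) :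
    kuoNumber gA ≤ Metric.infDist (gA i) (Submodule.span 𝕜 (gA '' {j | j ≠ i})) :=
  ciInf_le ⟨0, fun _ ⟨_, hr⟩ => hr ▸ Metric.infDist_nonneg⟩ i

end Numbers

section KuoRabier

variable {𝕜 : Type*} [RCLike 𝕜] {n m : ℕ}
  {A : EuclideanSpace 𝕜 (Fin n) →L[𝕜] EuclideanSpace 𝕜 (Fin m)}
  {gA : Fin m → EuclideanSpace 𝕜 (Fin n)}

theorem rabierNumber_le_kuoNumber (hgA : ∀ i x, A x i = inner 𝕜 (gA i) x) :
    rabierNumber A ≤ kuoNumber gA := by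
  obtain rfl | hm := eq_or_ne m 0
  · simp [kuoNumber, rabierNumber, Subsingleton.elim _ (0 : EuclideanSpace 𝕜 (Fin 0))]
  have : NeZero m := ⟨hm⟩
  refine le_ciInf fun i => (Metric.le_infDist ⟨0, Submodule.zero_mem _⟩).mpr fun v hv => ?_
  obtain ⟨c, hci, hc⟩ := exists_sum_smul_eq_sub_of_mem_span hv
  set ψ : EuclideanSpace 𝕜 (Fin m) := WithLp.toLp 2 c
  have hψ : 1 ≤ ‖ψ‖ := by simpa [ψ, hci] using PiLp.norm_apply_le ψ i
  calc rabierNumber A ≤ rabierNumber A * ‖ψ‖ := le_mul_of_one_le_right (rabierNumber_nonneg A) hψ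
    _ ≤ ‖ContinuousLinearMap.adjoint A ψ‖ := rabierNumber_mul_norm_le A ψ
    _ = dist (gA i) v := by
        rw [ContinuousLinearMap.adjoint_apply_eq_sum_smul hgA, dist_eq_norm, ← hc]

theorem kuoNumber_le_sqrt_mul_rabierNumber (hgA : ∀ i x, A x i = inner 𝕜 (gA i) x) :
    kuoNumber gA ≤ √m * rabierNumber A := by
  obtain rfl | hm := eq_or_ne m 0
  · simp [kuoNumber]
  have : NeZero m := ⟨hm⟩
  rw [← div_le_iff₀' (by positivity)]
  refine le_rabierNumber fun φ hφ => ?_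
  obtain ⟨i, hi⟩ := EuclideanSpace.exists_norm_le_sqrt_card_mul_norm_apply φ
  rw [hφ, Fintype.card_fin] at hi
  rw [div_le_iff₀' (by positivity)]
  calc kuoNumber gA ≤ kuoNumber gA * (√m * ‖φ i‖) :=
        le_mul_of_one_le_right (kuoNumber_nonneg gA) hi
    _ = √m * (kuoNumber gA * ‖φ i‖) := by ring
    _ ≤ √m * (Metric.infDist (gA i) (Submodule.span 𝕜 (gA '' {j | j ≠ i})) * ‖φ i‖) := by
        gcongr; exact kuoNumber_le gA i
    _ ≤ √m * ‖∑ j, φ j • gA j‖ := by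
        gcongr; exact infDist_span_mul_norm_le_norm_sum_smul gA φ i
    _ = √m * ‖ContinuousLinearMap.adjoint A φ‖ := by
        rw [ContinuousLinearMap.adjoint_apply_eq_sum_smul hgA]

end KuoRabier

theorem stmt14 {𝕜 : Type*} [RCLike 𝕜] {n m : ℕ}
    (A : EuclideanSpace 𝕜 (Fin n) →L[𝕜] EuclideanSpace 𝕜 (Fin m))
    (gA : Fin m → EuclideanSpace 𝕜 (Fin n))
    (hgA : ∀ (i : Fin m) (x : EuclideanSpace 𝕜 (Fin n)), A x i = inner 𝕜 (gA i) x) :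
    rabierNumber A ≤ kuoNumber gA ∧
      kuoNumber gA ≤ Real.sqrt m * rabierNumber A :=
  ⟨rabierNumber_le_kuoNumber hgA, kuoNumber_le_sqrt_mul_rabierNumber hgA⟩
end
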